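/- Let n ≥ 1, let G : ℝⁿ → Matrix (Fin n) (Fin n) ℝ be a C¹ map with G(x) symmetric for all x, and let V : ℝⁿ → ℝ be C². Assume: (A1) there are real constants c(i,j,k) such that ∂ᵢG^{jk}(x) = c(i,j,k) for all x; (A2) there are real constants d(i,k) such that ∂ᵢ(Σⱼ G^{jk} ∂ⱼV)(x) = d(i,k) for all x. Let q, φ : ℝ → ℝⁿ be differentiable with q'ʲ(t) = Σₗ G^{jℓ}(q(t)) (φₗ(t) − ∂ₗV(q(t))) and φ'ᵢ(t) + (1/2) Σ_{j,k} c(i,j,k) φⱼ(t) φₖ(t) = Σₖ d(i,k) φₖ(t) for all indices and all t. Then the function φ*ᵢ(t) := φᵢ(t) − 2 ∂ᵢV(q(t)) is differentiable and satisfies the sign-reversed equation φ*'ᵢ(t) + (1/2) Σ_{j,k} c(i,j,k) φ*ⱼ(t) φ*ₖ(t) = − Σₖ d(i,k) φ*ₖ(t) for all i and t. -/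

import Mathlib

/-!
Write `bᵢ = ∂ᵢV(q)`. The constraint and the symmetry of the Hessian of `V` give
`bᵢ' = Σₖ Eᵢₖ (φₖ - bₖ)` with `Eᵢₖ = Σⱼ G^{jk} ∂ᵢ∂ⱼV(q)`, while the product rule turns (A2) into
`d(i,k) = Σⱼ c(i,j,k) bⱼ + Eᵢₖ`. Since `c(i,j,k) = c(i,k,j)` by the symmetry of `G`, expanding the
quadratic term at `φ* = φ - 2b` reduces the equation for `φ*` to an algebraic identity.
-/

/-- Partial derivative of `F : ℝⁿ → ℝ` in the `i`-th coordinate direction. -/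
noncomputable def pd {n : ℕ} (F : (Fin n → ℝ) → ℝ) (i : Fin n) (x : Fin n → ℝ) : ℝ :=
  fderiv ℝ F x (Pi.single i 1)

open Finset

section PartialDerivatives

variable {n : ℕ}

lemma fderiv_apply_eq_sum_pd (F : (Fin n → ℝ) → ℝ) (x v : Fin n → ℝ) :
    fderiv ℝ F x v = ∑ j, v j * pd F j x := by
  conv_lhs => rw [pi_eq_sum_univ' v]
  simp only [map_sum, map_smul, smul_eq_mul]
  rfl

lemma ContDiff.pd {F : (Fin n → ℝ) → ℝ} {k m : WithTop ℕ∞} (hF : ContDiff ℝ k F)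
    (hmk : m + 1 ≤ k) (i : Fin n) : ContDiff ℝ m (pd F i) :=
  (hF.fderiv_right hmk).clm_apply contDiff_const

lemma pd_pd_comm {V : (Fin n → ℝ) → ℝ} {x : Fin n → ℝ} (hV : ContDiffAt ℝ 2 V x) (i j : Fin n) :
    pd (pd V i) j x = pd (pd V j) i x := by
  have hV' : DifferentiableAt ℝ (fderiv ℝ V) x :=
    (hV.fderiv_right (m := 1) le_rfl).differentiableAt one_ne_zero
  have hsnd : ∀ v w, fderiv ℝ (fun y => fderiv ℝ V y v) x w = fderiv ℝ (fderiv ℝ V) x w v :=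
    fun v w => by simp [fderiv_clm_apply hV' (differentiableAt_const v)]
  change fderiv ℝ (fun y => fderiv ℝ V y (Pi.single i 1)) x (Pi.single j 1) =
    fderiv ℝ (fun y => fderiv ℝ V y (Pi.single j 1)) x (Pi.single i 1)
  rw [hsnd, hsnd]
  exact hV.isSymmSndFDerivAt (by simp) _ _

lemma hasDerivAt_comp_eq_sum_pd {F : (Fin n → ℝ) → ℝ} {q : ℝ → Fin n → ℝ} {v : Fin n → ℝ}
    {t : ℝ} (hF : DifferentiableAt ℝ F (q t)) (hq : ∀ j, HasDerivAt (fun s => q s j) (v j) t) :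
    HasDerivAt (fun s => F (q s)) (∑ j, v j * pd F j (q t)) t := by
  rw [← fderiv_apply_eq_sum_pd]
  exact hF.hasFDerivAt.comp_hasDerivAt t (hasDerivAt_pi.2 hq)

lemma pd_sum_mul {ι : Type*} [Fintype ι] {f g : ι → (Fin n → ℝ) → ℝ} {x : Fin n → ℝ}
    (hf : ∀ j, DifferentiableAt ℝ (f j) x) (hg : ∀ j, DifferentiableAt ℝ (g j) x) (i : Fin n) :
    pd (fun y => ∑ j, f j y * g j y) i x = ∑ j, (f j x * pd (g j) i x + g j x * pd (f j) i x) := by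
  have h : HasFDerivAt (fun y => ∑ j, f j y * g j y)
      (∑ j, (f j x • fderiv ℝ (g j) x + g j x • fderiv ℝ (f j) x)) x :=
    HasFDerivAt.fun_sum fun j _ => (hf j).hasFDerivAt.mul (hg j).hasFDerivAt
  rw [pd, h.fderiv]
  simp only [FunLike.coe_sum, Finset.sum_apply, add_apply, smul_apply, smul_eq_mul]
  rfl

end PartialDerivatives

section SignReversal

variable {ι : Type*} [Fintype ι]

lemma sum_sum_mul_sub_two_mul_sub_two_mul {R : Type*} [CommRing R] {c : ι → ι → R}
    (hc : ∀ j k, c j k = c k j) (a b : ι → R) :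
    ∑ j, ∑ k, c j k * (a j - 2 * b j) * (a k - 2 * b k)
      = ∑ j, ∑ k, c j k * a j * a k - 4 * ∑ k, (∑ j, c j k * b j) * (a k - b k) := by
  have hswap : ∑ j, ∑ k, c j k * a j * b k = ∑ j, ∑ k, c j k * b j * a k := by
    rw [sum_comm]
    exact sum_congr rfl fun k _ => sum_congr rfl fun j _ => by rw [hc]; ring
  calc ∑ j, ∑ k, c j k * (a j - 2 * b j) * (a k - 2 * b k)
      = ∑ j, ∑ k, c j k * a j * a k - 2 * ∑ j, ∑ k, c j k * a j * b k
          - 2 * ∑ j, ∑ k, c j k * b j * a k + 4 * ∑ j, ∑ k, c j k * b j * b k := by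
        simp only [mul_sum, ← sum_sub_distrib, ← sum_add_distrib]
        exact sum_congr rfl fun j _ => sum_congr rfl fun k _ => by ring
    _ = ∑ j, ∑ k, c j k * a j * a k - 4 * ∑ k, (∑ j, c j k * b j) * (a k - b k) := by
        rw [hswap, sum_comm (f := fun j k => c j k * b j * a k),
          sum_comm (f := fun j k => c j k * b j * b k)]
        simp only [sum_mul, mul_sub, sum_sub_distrib]
        ring

lemma sign_reversal_identity {c : ι → ι → ℝ} (hc : ∀ j k, c j k = c k j)
    {a b d e : ι → ℝ} (hd : ∀ k, d k = ∑ j, c j k * b j + e k) {x : ℝ}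
    (hx : x + (1/2) * ∑ j, ∑ k, c j k * a j * a k = ∑ k, d k * a k) :
    x - 2 * ∑ k, e k * (a k - b k)
      = -(1/2) * (∑ j, ∑ k, c j k * (a j - 2 * b j) * (a k - 2 * b k))
        - ∑ k, d k * (a k - 2 * b k) := by
  have hlin : ∑ k, d k * a k - 2 * ∑ k, e k * (a k - b k)
      = 2 * ∑ k, (∑ j, c j k * b j) * (a k - b k) - ∑ k, d k * (a k - 2 * b k) := by
    simp only [hd, mul_sum, ← sum_sub_distrib]
    exact sum_congr rfl fun k _ => by ring
  rw [sum_sum_mul_sub_two_mul_sub_two_mul hc]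
  linear_combination hx + hlin

end SignReversal

theorem stmt6_general {n : ℕ}
    (G : (Fin n → ℝ) → Fin n → Fin n → ℝ)
    (hG : ∀ j k, ContDiff ℝ 1 (fun x => G x j k))
    (hGsymm : ∀ x j k, G x j k = G x k j)
    (V : (Fin n → ℝ) → ℝ) (hV : ContDiff ℝ 2 V)
    (c : Fin n → Fin n → Fin n → ℝ)
    (hA1 : ∀ i j k x, pd (fun y => G y j k) i x = c i j k)
    (dm : Fin n → Fin n → ℝ)
    (hA2 : ∀ i k x, pd (fun y => ∑ j, G y j k * pd V j y) i x = dm i k)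
    (q dq φ dφ : ℝ → Fin n → ℝ)
    (hq : ∀ j t, HasDerivAt (fun s => q s j) (dq t j) t)
    (hconstr : ∀ j t, dq t j = ∑ l, G (q t) j l * (φ t l - pd V l (q t)))
    (hφ : ∀ i t, HasDerivAt (fun s => φ s i) (dφ t i) t)
    (hode : ∀ i t, dφ t i + (1/2) * ∑ j, ∑ k, c i j k * φ t j * φ t k
      = ∑ k, dm i k * φ t k) :
    ∀ i t, HasDerivAt (fun s => φ s i - 2 * pd V i (q s))
      (-(1/2) * (∑ j, ∑ k, c i j k * (φ t j - 2 * pd V j (q t)) * (φ t k - 2 * pd V k (q t)))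
        - ∑ k, dm i k * (φ t k - 2 * pd V k (q t))) t := by
  intro i t
  have hpdV (j : Fin n) : ContDiff ℝ 1 (pd V j) := hV.pd (by norm_num) j
  have hc (j k : Fin n) : c i j k = c i k j := by
    rw [← hA1 i j k (q t), ← hA1 i k j (q t), funext fun y => hGsymm y j k]
  set E := fun k => ∑ j, G (q t) j k * pd (pd V j) i (q t)
  have hE : HasDerivAt (fun s => pd V i (q s)) (∑ k, E k * (φ t k - pd V k (q t))) t := by
    convert hasDerivAt_comp_eq_sum_pd ((hpdV i).differentiable one_ne_zero (q t)) (hq · t) using 1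
    simp only [E, hconstr, pd_pd_comm hV.contDiffAt i, sum_mul]
    rw [sum_comm]
    exact sum_congr rfl fun k _ => sum_congr rfl fun j _ => by ring
  have hd (k : Fin n) : dm i k = ∑ j, c i j k * pd V j (q t) + E k := by
    rw [← hA2 i k (q t), pd_sum_mul (fun j => (hG j k).differentiable one_ne_zero (q t))
      (fun j => (hpdV j).differentiable one_ne_zero (q t)), sum_add_distrib, add_comm]
    simp only [E, hA1, mul_comm]
  exact ((hφ i t).sub (hE.const_mul 2)).congr_deriv (sign_reversal_identity hc hd (hode i t))

/-- under assumptions (A1) and (A2), if `(q, φ)` solves the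
constraint `q'ʲ = Σₗ G^{jℓ}(q)(φₗ − ∂ₗV(q))` together with the coordinate
Euler–Lagrange equation for `φ`, then `φ*ᵢ := φᵢ − 2∂ᵢV(q)` is differentiable
and solves the sign-reversed equation
`φ*'ᵢ + (1/2) Σ c(i,j,k) φ*ⱼφ*ₖ = −Σₖ d(i,k) φ*ₖ`. -/
theorem stmt6 {n : ℕ} (hn : 1 ≤ n)
    (G : (Fin n → ℝ) → Fin n → Fin n → ℝ)
    (hG : ∀ j k, ContDiff ℝ 1 (fun x => G x j k))
    (hGsymm : ∀ x j k, G x j k = G x k j)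
    (V : (Fin n → ℝ) → ℝ) (hV : ContDiff ℝ 2 V)
    (c : Fin n → Fin n → Fin n → ℝ)
    (hA1 : ∀ i j k x, pd (fun y => G y j k) i x = c i j k)
    (dm : Fin n → Fin n → ℝ)
    (hA2 : ∀ i k x, pd (fun y => ∑ j, G y j k * pd V j y) i x = dm i k)
    (q dq φ dφ : ℝ → Fin n → ℝ)
    (hq : ∀ j t, HasDerivAt (fun s => q s j) (dq t j) t)
    (hconstr : ∀ j t, dq t j = ∑ l, G (q t) j l * (φ t l - pd V l (q t)))
    (hφ : ∀ i t, HasDerivAt (fun s => φ s i) (dφ t i) t)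
    (hode : ∀ i t, dφ t i + (1/2) * ∑ j, ∑ k, c i j k * φ t j * φ t k
      = ∑ k, dm i k * φ t k) :
    ∀ i t, HasDerivAt (fun s => φ s i - 2 * pd V i (q s))
      (-(1/2) * (∑ j, ∑ k, c i j k * (φ t j - 2 * pd V j (q t)) * (φ t k - 2 * pd V k (q t)))
        - ∑ k, dm i k * (φ t k - 2 * pd V k (q t))) t :=
  stmt6_general G hG hGsymm V hV c hA1 dm hA2 q dq φ dφ hq hconstr hφ hode
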